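/- For each prime p and positive integer r, the map f : X_r → ⊔_{s=1}^r (Φ_{r,s} × Y_s), sending x = (l_1,…,l_r) to the unique pair (φ_x, (A_1,…,A_s)) with L_i ≡ A_{φ_x(i)} (mod p) for all i, is a bijection. -/
import Mathlib


open scoped BigOperators

namespace FMP

/-- Partial sums: `psum l i = l 0 + ... + l i`. -/
def psum {r : ℕ} (l : Fin r → ℕ) (i : Fin r) : ℕ := ∑ j ∈ Finset.Iic i, l j
section Comb

/-- Extension of φ : Fin r → Fin s to ℕ → ℕ (by zero). -/
def extF {r s : ℕ} (φ : Fin r → Fin s) : ℕ → ℕ := fun a => if h : a < r then (φ ⟨a, h⟩ : ℕ) else 0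

/-- Φ_{r,s}: surjections φ : [r] → [s] with φ(a) ≠ φ(a+1) for all a. -/
def PhiSet (r s : ℕ) : Set (Fin r → Fin s) :=
  {φ | Function.Surjective φ ∧ ∀ a : ℕ, a + 1 < r → extF φ a ≠ extF φ (a + 1)}

/-- δ_φ(i) = #{a ∈ [i-1] : φ(a) > φ(a+1)} (1-based i). -/
def deltaF {r s : ℕ} (φ : Fin r → Fin s) (i : ℕ) : ℕ :=
  ((Finset.range (i - 1)).filter fun a => extF φ (a + 1) < extF φ a).card

/-- β(φ) = δ_φ(r) + 1. -/
def betaF {r s : ℕ} (φ : Fin r → Fin s) : ℕ := deltaF φ r + 1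

/-- X_r: tuples (l_1, ..., l_r) ∈ [p-1]^r all of whose partial sums are prime to p. -/
def Xr (p r : ℕ) : Set (Fin r → ℕ) :=
  {l | (∀ i, 0 < l i ∧ l i < p) ∧ ∀ i, Nat.Coprime (psum l i) p}

/-- Y_s: tuples 0 < A_1 < ⋯ < A_s < p. -/
def Ys (p s : ℕ) : Set (Fin s → ℕ) :=
  {Av | StrictMono Av ∧ (∀ t, 0 < Av t) ∧ ∀ t, Av t < p}

end Comb



private lemma psum_zero {r : ℕ} (l : Fin r → ℕ) (h : 0 < r) : psum l ⟨0, h⟩ = l ⟨0, h⟩ := by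
  unfold psum
  have : Finset.Iic (⟨0, h⟩ : Fin r) = {⟨0, h⟩} := by
    ext j; simp [Fin.le_def, Fin.ext_iff]
  rw [this, Finset.sum_singleton]

private lemma psum_succ {r : ℕ} (l : Fin r → ℕ) (k : ℕ) (h : k + 1 < r) :
    psum l ⟨k + 1, h⟩ = psum l ⟨k, Nat.lt_of_succ_lt h⟩ + l ⟨k + 1, h⟩ := by
  unfold psum
  have he : Finset.Iic (⟨k + 1, h⟩ : Fin r) =
      insert ⟨k + 1, h⟩ (Finset.Iic ⟨k, Nat.lt_of_succ_lt h⟩) := by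
    ext j; simp [Fin.le_def, Fin.ext_iff]; omega
  rw [he, Finset.sum_insert (by simp [Fin.le_def])]
  ring

private lemma modeq_eq {p a b : ℕ} (h : a ≡ b [MOD p]) (ha : a < p) (hb : b < p) : a = b := by
  have h2 := h
  unfold Nat.ModEq at h2
  rwa [Nat.mod_eq_of_lt ha, Nat.mod_eq_of_lt hb] at h2

private lemma step {p a b : ℕ} (ha : a < p) (hb : b < p) (hab : a ≠ b) :
    0 < (b + p - a) % p ∧ (b + p - a) % p < p ∧ a + (b + p - a) % p ≡ b [MOD p] := by
  have hp : 0 < p := by omega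
  refine ⟨?_, Nat.mod_lt _ hp, ?_⟩
  · rcases Nat.eq_zero_or_pos ((b + p - a) % p) with h0 | h0
    · exfalso
      have hdvd : p ∣ (b + p - a) := Nat.dvd_of_mod_eq_zero h0
      have h1 : p ≤ b + p - a := Nat.le_of_dvd (by omega) hdvd
      have hdvd2 : p ∣ (b + p - a - p) := (Nat.dvd_sub hdvd dvd_rfl)
      have h2 : b + p - a - p = 0 := Nat.eq_zero_of_dvd_of_lt hdvd2 (by omega)
      omega
    · exact h0
  · calc a + (b + p - a) % p ≡ a + (b + p - a) [MOD p] :=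
          Nat.ModEq.add_left a (Nat.mod_modEq _ p)
      _ = b + p := by omega
      _ ≡ b [MOD p] := by unfold Nat.ModEq; exact Nat.add_mod_right b p

/-- The map f : X_r → ⊔_{s=1}^r (Φ_{r,s} × Y_s), sending x to the unique pair (φ_x, A) with
L_i ≡ A_{φ_x(i)} (mod p) for all i, is well defined and bijective. -/
theorem f_bijective (p r : ℕ) (hp : p.Prime) (hr : 0 < r) :
    (∀ l ∈ Xr p r, ∃! q : Σ s : ℕ, (Fin r → Fin s) × (Fin s → ℕ),
        (1 ≤ q.1 ∧ q.1 ≤ r) ∧ q.2.1 ∈ PhiSet r q.1 ∧ q.2.2 ∈ Ys p q.1 ∧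
          ∀ i : Fin r, psum l i ≡ q.2.2 (q.2.1 i) [MOD p]) ∧
    (∀ q : Σ s : ℕ, (Fin r → Fin s) × (Fin s → ℕ),
        (1 ≤ q.1 ∧ q.1 ≤ r) → q.2.1 ∈ PhiSet r q.1 → q.2.2 ∈ Ys p q.1 →
        ∃! l : Fin r → ℕ, l ∈ Xr p r ∧ ∀ i : Fin r, psum l i ≡ q.2.2 (q.2.1 i) [MOD p]) := by
  constructor
  · intro l hl
    obtain ⟨hl1, hl2⟩ := hl
    have hp2 : 2 ≤ p := hp.two_le
    set B : Fin r → ℕ := fun i => psum l i % p with hB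
    have hBlt : ∀ i, B i < p := fun i => Nat.mod_lt _ (by omega)
    have hBpos : ∀ i, 0 < B i := by
      intro i
      rcases Nat.eq_zero_or_pos (B i) with h0 | h0
      · exfalso
        have hdvd : p ∣ psum l i := Nat.dvd_of_mod_eq_zero h0
        exact (hp.coprime_iff_not_dvd.mp (hl2 i).symm) hdvd
      · exact h0
    have hBmod : ∀ i, psum l i ≡ B i [MOD p] := fun i => (Nat.mod_modEq _ p).symm
    have hBadj : ∀ (k : ℕ) (h : k + 1 < r), B ⟨k + 1, h⟩ ≠ B ⟨k, Nat.lt_of_succ_lt h⟩ := by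
      intro k h heq
      have hm : psum l ⟨k + 1, h⟩ ≡ psum l ⟨k, Nat.lt_of_succ_lt h⟩ [MOD p] :=
        (hBmod _).trans (heq ▸ (hBmod _).symm)
      rw [psum_succ l k h] at hm
      have : l ⟨k + 1, h⟩ ≡ 0 [MOD p] := by
        have := (Nat.ModEq.add_right_cancel' (psum l ⟨k, Nat.lt_of_succ_lt h⟩) ?_ : l ⟨k+1,h⟩ ≡ 0 [MOD p])
        · exact this
        · calc l ⟨k+1,h⟩ + psum l ⟨k, Nat.lt_of_succ_lt h⟩
              = psum l ⟨k, Nat.lt_of_succ_lt h⟩ + l ⟨k+1,h⟩ := by ring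
            _ ≡ psum l ⟨k, Nat.lt_of_succ_lt h⟩ [MOD p] := hm
            _ = 0 + psum l ⟨k, Nat.lt_of_succ_lt h⟩ := by ring
      have hd : p ∣ l ⟨k + 1, h⟩ := (Nat.modEq_zero_iff_dvd).mp this
      have := hl1 ⟨k + 1, h⟩
      have := Nat.le_of_dvd this.1 hd
      omega
    set S : Finset ℕ := Finset.univ.image B with hS
    set s : ℕ := S.card with hscard
    have hmemS : ∀ i, B i ∈ S := fun i => Finset.mem_image_of_mem B (Finset.mem_univ i)
    have hs1 : 1 ≤ s := Finset.card_pos.mpr ⟨B ⟨0, hr⟩, hmemS ⟨0, hr⟩⟩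
    have hs2 : s ≤ r := le_trans Finset.card_image_le (by simp)
    set e := S.orderIsoOfFin rfl with he
    set A : Fin s → ℕ := fun t => (e t : ℕ) with hA
    have hAmono : StrictMono A := fun a b hab => by
      have := e.strictMono hab
      exact this
    have hAmem : ∀ t, A t ∈ S := fun t => (e t).2
    set φ : Fin r → Fin s := fun i => e.symm ⟨B i, hmemS i⟩ with hφ
    have hAφ : ∀ i, A (φ i) = B i := by
      intro i
      simp only [hA, hφ, OrderIso.apply_symm_apply]
    have hφsurj : Function.Surjective φ := by
      intro t
      have : A t ∈ S := hAmem t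
      rw [hS] at this
      obtain ⟨i, _, hi⟩ := Finset.mem_image.mp this
      refine ⟨i, ?_⟩
      have : (⟨B i, hmemS i⟩ : {x // x ∈ S}) = e t := Subtype.ext hi
      simp only [hφ, this, OrderIso.symm_apply_apply]
    -- membership facts about A
    have hApos : ∀ t, 0 < A t := by
      intro t
      obtain ⟨i, hi⟩ := hφsurj t
      rw [← hi, hAφ]; exact hBpos i
    have hAlt : ∀ t, A t < p := by
      intro t
      obtain ⟨i, hi⟩ := hφsurj t
      rw [← hi, hAφ]; exact hBlt i
    have hφadj : ∀ a : ℕ, a + 1 < r → extF φ a ≠ extF φ (a + 1) := by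
      intro a ha
      have h1 : extF φ a = (φ ⟨a, Nat.lt_of_succ_lt ha⟩ : ℕ) := dif_pos _
      have h2 : extF φ (a + 1) = (φ ⟨a + 1, ha⟩ : ℕ) := dif_pos _
      rw [h1, h2]
      intro hv
      have : φ ⟨a, Nat.lt_of_succ_lt ha⟩ = φ ⟨a + 1, ha⟩ := Fin.ext hv
      have : A (φ ⟨a, Nat.lt_of_succ_lt ha⟩) = A (φ ⟨a + 1, ha⟩) := by rw [this]
      rw [hAφ, hAφ] at this
      exact hBadj a ha this.symm
    refine ⟨⟨s, φ, A⟩, ⟨⟨hs1, hs2⟩, ⟨hφsurj, hφadj⟩, ⟨hAmono, hApos, hAlt⟩,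
      fun i => (hBmod i).trans (by show B i ≡ A (φ i) [MOD p]; rw [hAφ])⟩, ?_⟩
    rintro ⟨s', φ', A'⟩ ⟨⟨hs1', hs2'⟩, ⟨hφsurj', hφadj'⟩, ⟨hAm', hAp', hAl'⟩, hcg'⟩
    have hAmono' : StrictMono A' := hAm'
    have hAlt' : ∀ t, A' t < p := hAl'
    have hcong' : ∀ i : Fin r, psum l i ≡ A' (φ' i) [MOD p] := hcg'
    -- values of A' ∘ φ' equal B
    have hval : ∀ i, A' (φ' i) = B i := by
      intro i
      exact modeq_eq ((hcong' i).symm.trans (hBmod i)) (hAlt' _) (hBlt i)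
    have hrange : Set.range A' = Set.range A := by
      have h1 : Set.range A' = Set.range (fun i => A' (φ' i)) :=
        ((Set.range_comp A' φ').trans (by rw [Function.Surjective.range_eq hφsurj', Set.image_univ])).symm
      have h2 : Set.range A = Set.range (fun i => A (φ i)) :=
        ((Set.range_comp A φ).trans (by rw [Function.Surjective.range_eq hφsurj, Set.image_univ])).symm
      have h3 : (fun i => A' (φ' i)) = fun i => A (φ i) :=
        funext fun i => (hval i).trans (hAφ i).symm
      rw [h1, h2, h3]
    have himg : Finset.univ.image A' = Finset.univ.image A := by
      apply Finset.coe_inj.mp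
      simp only [Finset.coe_image, Finset.coe_univ, Set.image_univ]
      exact hrange
    have hss : s' = s := by
      have h1 : (Finset.univ.image A').card = s' := by
        rw [Finset.card_image_of_injective _ hAmono'.injective, Finset.card_univ,
          Fintype.card_fin]
      have h2 : (Finset.univ.image A).card = s := by
        rw [Finset.card_image_of_injective _ hAmono.injective, Finset.card_univ,
          Fintype.card_fin]
      rw [himg, h2] at h1
      exact h1.symm
    subst hss
    haveI : WellFoundedLT (Fin s) := inferInstance
    have hAA : A' = A := (StrictMono.range_inj (f := A') (g := A) hAmono' hAmono).mp hrange
    subst hAA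
    have hφφ : φ' = φ := by
      funext i
      exact hAmono'.injective ((hval i).trans (hAφ i).symm)
    rw [hφφ]
  · rintro ⟨s, φ, A⟩ ⟨hs1, hs2⟩ ⟨hφsurj, hφadj⟩ ⟨hAmono, hApos, hAlt⟩
    have hp2 : 2 ≤ p := hp.two_le
    -- reduce to plain statements
    simp only at hφadj hApos hAlt ⊢
    set C : Fin r → ℕ := fun i => A (φ i) with hC
    have hCpos : ∀ i, 0 < C i := fun i => hApos _
    have hClt : ∀ i, C i < p := fun i => hAlt _
    have hCadj : ∀ (k : ℕ) (h : k + 1 < r), C ⟨k, Nat.lt_of_succ_lt h⟩ ≠ C ⟨k + 1, h⟩ := by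
      intro k h heq
      apply hφadj k h
      have h1 : extF φ k = (φ ⟨k, Nat.lt_of_succ_lt h⟩ : ℕ) := dif_pos _
      have h2 : extF φ (k + 1) = (φ ⟨k + 1, h⟩ : ℕ) := dif_pos _
      rw [h1, h2]
      exact congrArg Fin.val (hAmono.injective heq)
    set l : Fin r → ℕ := fun i =>
      if h0 : (i : ℕ) = 0 then C i
      else (C i + p - C ⟨(i : ℕ) - 1, Nat.lt_of_le_of_lt (Nat.sub_le _ _) i.isLt⟩) % p with hldef
    have main : ∀ (k : ℕ) (hk : k < r),
        (0 < l ⟨k, hk⟩ ∧ l ⟨k, hk⟩ < p) ∧ psum l ⟨k, hk⟩ ≡ C ⟨k, hk⟩ [MOD p] := by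
      intro k
      induction k with
      | zero =>
        intro hk
        have hl0 : l ⟨0, hk⟩ = C ⟨0, hk⟩ := dif_pos rfl
        refine ⟨⟨?_, ?_⟩, ?_⟩
        · rw [hl0]; exact hCpos _
        · rw [hl0]; exact hClt _
        · rw [psum_zero l hk, hl0]
      | succ k ih =>
        intro hk
        have hk' : k < r := Nat.lt_of_succ_lt hk
        obtain ⟨⟨hpos, hlt⟩, hmod⟩ := ih hk'
        have hne : C ⟨k, hk'⟩ ≠ C ⟨k + 1, hk⟩ := hCadj k hk
        have hlval : l ⟨k + 1, hk⟩ = (C ⟨k + 1, hk⟩ + p - C ⟨k, hk'⟩) % p := by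
          rw [hldef]
          simp only
          rw [dif_neg (by simp)]
          rfl
        obtain ⟨hd1, hd2, hd3⟩ := step (p := p) (hClt ⟨k, hk'⟩) (hClt ⟨k + 1, hk⟩) hne
        refine ⟨⟨by rw [hlval]; exact hd1, by rw [hlval]; exact hd2⟩, ?_⟩
        rw [psum_succ l k hk, hlval]
        calc psum l ⟨k, hk'⟩ + (C ⟨k + 1, hk⟩ + p - C ⟨k, hk'⟩) % p
            ≡ C ⟨k, hk'⟩ + (C ⟨k + 1, hk⟩ + p - C ⟨k, hk'⟩) % p [MOD p] :=
              Nat.ModEq.add_right _ hmod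
          _ ≡ C ⟨k + 1, hk⟩ [MOD p] := hd3
    have hlX : l ∈ Xr p r := by
      constructor
      · intro i
        have := (main i.1 i.2).1
        simpa using this
      · intro i
        have hm := (main i.1 i.2).2
        have hi : (⟨i.1, i.2⟩ : Fin r) = i := rfl
        rw [hi] at hm
        have hnd : ¬ p ∣ psum l i := by
          intro hdvd
          have h0 : psum l i % p = 0 := Nat.mod_eq_zero_of_dvd hdvd
          have h1 : C i % p = 0 := by rw [← hm]; exact h0
          rw [Nat.mod_eq_of_lt (hClt i)] at h1
          have := hCpos i
          omega
        exact Nat.coprime_comm.mp (hp.coprime_iff_not_dvd.mpr hnd)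
    have hlcong : ∀ i : Fin r, psum l i ≡ C i [MOD p] := by
      intro i
      have hm := (main i.1 i.2).2
      have hi : (⟨i.1, i.2⟩ : Fin r) = i := rfl
      rwa [hi] at hm
    refine ⟨l, ⟨hlX, hlcong⟩, ?_⟩
    rintro l' ⟨⟨hb', hcop'⟩, hc'⟩
    have key : ∀ (k : ℕ) (hk : k < r),
        l' ⟨k, hk⟩ = l ⟨k, hk⟩ ∧ psum l' ⟨k, hk⟩ = psum l ⟨k, hk⟩ := by
      intro k
      induction k with
      | zero =>
        intro hk
        have h1 : psum l' ⟨0, hk⟩ ≡ psum l ⟨0, hk⟩ [MOD p] :=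
          (hc' ⟨0, hk⟩).trans (hlcong ⟨0, hk⟩).symm
        rw [psum_zero l' hk, psum_zero l hk] at h1
        have := modeq_eq h1 (hb' ⟨0, hk⟩).2 ((main 0 hk).1).2
        exact ⟨this, by rw [psum_zero l' hk, psum_zero l hk, this]⟩
      | succ k ih =>
        intro hk
        have hk' : k < r := Nat.lt_of_succ_lt hk
        obtain ⟨_, hps⟩ := ih hk'
        have h1 : psum l' ⟨k + 1, hk⟩ ≡ psum l ⟨k + 1, hk⟩ [MOD p] :=
          (hc' ⟨k + 1, hk⟩).trans (hlcong ⟨k + 1, hk⟩).symm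
        rw [psum_succ l' k hk, psum_succ l k hk, hps] at h1
        have h2 : l' ⟨k + 1, hk⟩ ≡ l ⟨k + 1, hk⟩ [MOD p] :=
          Nat.ModEq.add_left_cancel (Nat.ModEq.refl _) h1
        have h3 := modeq_eq h2 (hb' ⟨k + 1, hk⟩).2 ((main (k + 1) hk).1).2
        exact ⟨h3, by rw [psum_succ l' k hk, psum_succ l k hk, hps, h3]⟩
    funext i
    have := (key i.1 i.2).1
    simpa using this

end FMP
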